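/- arXiv:2505.21257 — 4 statements merged into one kernel-verified Lean document; each statement's English description precedes it below -/
import Mathlib

section
/- Let 2 ≤ k ≤ m and d ≥ 1 be integers, let K > 0, and let X ⊆ ℝ^m be a nonempty set of the form X = X_1 ∪ … ∪ X_L, where each X_i is a compact set contained in some affine subspace of ℝ^m of dimension m−k. Let ρ : ℝ^m ∖ X → ℝ^d be differentiable and satisfy ‖Dρ(z)‖ ≤ K / dist(z, X) for every z ∈ ℝ^m ∖ X, where ‖Dρ(z)‖ is the operator norm of the Fréchet derivative. Then for every R > 0 there exists a constant C > 0, depending only on m, k, K, R and X (but not on p), such that for every real p with k−1 < p < k one has (k−p) · ∫_{B(0,R) ∖ X} ‖Dρ(z)‖^p dz ≤ C, the integral being with respect to Lebesgue measure on ℝ^m. -/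
/-!
Each piece `Xᵢ` lies in an affine subspace `A` of codimension `k`. Projecting orthogonally onto
`A.direction` and its complement shows that the points of a ball within distance `s` of `Xᵢ`
have volume `O(sᵏ)`, so by the layer-cake formula
`∫_{B(0,R)} dist(z, Xᵢ)^(-p) ≤ |B(0,R)| + C p / (k - p)`, and `(k - p)` times it stays bounded as
`p → k`. Since `‖Dρ(z)‖ᵖ ≤ Kᵖ dist(z, X)^(-p)` and `dist(z, X) = dist(z, Xᵢ)` for some `i`, the
energy is bounded by the sum of these integrals over the pieces.
-/

open MeasureTheory Metric Set Module

theorem Real.rpow_le_max_one_rpow_mul_rpow_neg {a K d p κ : ℝ} (ha : 0 ≤ a) (hK : 0 ≤ K)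
    (hd : 0 ≤ d) (hp : 0 ≤ p) (hpκ : p ≤ κ) (h : a ≤ K / d) :
    a ^ p ≤ max 1 K ^ κ * d ^ (-p) :=
  calc a ^ p ≤ (K / d) ^ p := Real.rpow_le_rpow ha h hp
    _ = K ^ p * d ^ (-p) := by rw [Real.div_rpow hK hd, Real.rpow_neg hd, div_eq_mul_inv]
    _ ≤ max 1 K ^ κ * d ^ (-p) := by
      gcongr
      calc K ^ p ≤ max 1 K ^ p := Real.rpow_le_rpow hK (le_max_right _ _) hp
        _ ≤ max 1 K ^ κ := Real.rpow_le_rpow_of_exponent_le (le_max_left _ _) hpκ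

theorem Metric.exists_infDist_eq_infDist_iUnion {α ι : Type*} [PseudoMetricSpace α]
    {s : ι → Set α} (hs : IsCompact (⋃ i, s i)) (hne : (⋃ i, s i).Nonempty) (x : α) :
    ∃ i, infDist x (s i) = infDist x (⋃ i, s i) := by
  obtain ⟨y, hy, hxy⟩ := hs.exists_infDist_eq_dist hne x
  obtain ⟨i, hi⟩ := mem_iUnion.mp hy
  exact ⟨i, le_antisymm (hxy ▸ infDist_le_dist_of_mem hi)
    (infDist_le_infDist_of_subset (subset_iUnion s i) ⟨y, hi⟩)⟩

theorem setLIntegral_diff_iUnion_rpow_le_sum_infDist {α ι : Type*} [MetricSpace α]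
    [MeasurableSpace α] [OpensMeasurableSpace α] [Fintype ι] (μ : Measure α) {S : Set α}
    (hS : MeasurableSet S) {s : ι → Set α} (hs : ∀ i, IsCompact (s i))
    (hne : (⋃ i, s i).Nonempty) {f : α → ℝ} (hf0 : ∀ z, 0 ≤ f z) {K : ℝ} (hK : 0 ≤ K)
    (hf : ∀ z ∉ ⋃ i, s i, f z ≤ K / infDist z (⋃ i, s i)) {p κ : ℝ} (hp : 0 < p) (hpκ : p ≤ κ) :
    ∫⁻ z in S \ ⋃ i, s i, ENNReal.ofReal (f z ^ p) ∂μ ≤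
      ENNReal.ofReal (max 1 K ^ κ) *
        ∑ i, ∫⁻ z in S, ENNReal.ofReal (infDist z (s i) ^ (-p)) ∂μ := by
  have hcomp : IsCompact (⋃ i, s i) := isCompact_iUnion hs
  have hmeas : ∀ i, Measurable fun z => ENNReal.ofReal (infDist z (s i) ^ (-p)) := fun i =>
    ((continuous_infDist_pt _).measurable.pow_const _).ennreal_ofReal
  have hpointwise : ∀ z ∈ S \ ⋃ i, s i, ENNReal.ofReal (f z ^ p) ≤
      ∑ i, ENNReal.ofReal (max 1 K ^ κ) * ENNReal.ofReal (infDist z (s i) ^ (-p)) := by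
    rintro z ⟨-, hz⟩
    obtain ⟨i, hi⟩ := exists_infDist_eq_infDist_iUnion hcomp hne z
    calc ENNReal.ofReal (f z ^ p)
        ≤ ENNReal.ofReal (max 1 K ^ κ) * ENNReal.ofReal (infDist z (s i) ^ (-p)) := by
          rw [← ENNReal.ofReal_mul (by positivity), hi]
          exact ENNReal.ofReal_le_ofReal (Real.rpow_le_max_one_rpow_mul_rpow_neg (hf0 z) hK
            infDist_nonneg hp.le hpκ (hf z hz))
      _ ≤ _ := Finset.single_le_sum (f := fun j => ENNReal.ofReal (max 1 K ^ κ) *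
          ENNReal.ofReal (infDist z (s j) ^ (-p))) (fun _ _ => zero_le) (Finset.mem_univ i)
  calc ∫⁻ z in S \ ⋃ i, s i, ENNReal.ofReal (f z ^ p) ∂μ
      ≤ ∫⁻ z in S \ ⋃ i, s i, ∑ i, ENNReal.ofReal (max 1 K ^ κ) *
          ENNReal.ofReal (infDist z (s i) ^ (-p)) ∂μ :=
        setLIntegral_mono' (hS.diff hcomp.isClosed.measurableSet) hpointwise
    _ ≤ ∫⁻ z in S, ∑ i, ENNReal.ofReal (max 1 K ^ κ) *
          ENNReal.ofReal (infDist z (s i) ^ (-p)) ∂μ := lintegral_mono_set sdiff_subset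
    _ = _ := by
      rw [lintegral_finsetSum _ fun i _ => (hmeas i).const_mul _, Finset.mul_sum]
      simp_rw [lintegral_const_mul _ (hmeas _)]

theorem lintegral_ofReal_rpow_neg_le_of_measure_lt_le {α : Type*} [MeasurableSpace α]
    (μ : Measure α) {g : α → ℝ} (hg : Measurable g) (hg0 : ∀ x, 0 ≤ g x) {C : ENNReal}
    {κ p : ℝ} (hp : 0 < p) (hpκ : p < κ)
    (hC : ∀ s, 0 < s → μ {x | g x < s} ≤ C * ENNReal.ofReal (s ^ κ)) :
    ∫⁻ x, ENNReal.ofReal (g x ^ (-p)) ∂μ ≤ μ univ + C * ENNReal.ofReal (p / (κ - p)) := by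
  have hexp : -(κ / p) < -1 := neg_lt_neg ((one_lt_div hp).mpr hpκ)
  rw [lintegral_eq_lintegral_meas_lt μ (ae_of_all _ fun x => Real.rpow_nonneg (hg0 x) _)
      (hg.pow_const _).aemeasurable, ← Ioc_union_Ioi_eq_Ioi zero_le_one,
    lintegral_union measurableSet_Ioi (Ioc_disjoint_Ioi le_rfl)]
  gcongr ?_ + ?_
  · calc ∫⁻ t in Ioc 0 1, μ {x | t < g x ^ (-p)} ≤ ∫⁻ t in Ioc 0 1, μ univ :=
          lintegral_mono fun t => measure_mono (subset_univ _)
      _ = μ univ := by simp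
  · have hlevel : ∀ t ∈ Ioi (1 : ℝ),
        μ {x | t < g x ^ (-p)} ≤ C * ENNReal.ofReal (t ^ (-(κ / p))) := by
      intro t ht
      have ht0 : 0 < t := zero_lt_one.trans ht
      have hsub : {x | t < g x ^ (-p)} ⊆ {x | g x < t ^ (-p)⁻¹} := by
        intro x hx
        rcases (hg0 x).eq_or_lt with hx0 | hx0
        · rw [mem_ofPred_eq, ← hx0, Real.zero_rpow (neg_ne_zero.mpr hp.ne')] at hx
          linarith
        · exact (Real.lt_rpow_inv_iff_of_neg hx0 ht0 (neg_neg_of_pos hp)).mpr hx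
      calc μ {x | t < g x ^ (-p)} ≤ μ {x | g x < t ^ (-p)⁻¹} := measure_mono hsub
        _ ≤ C * ENNReal.ofReal ((t ^ (-p)⁻¹) ^ κ) := hC _ (Real.rpow_pos_of_pos ht0 _)
        _ = C * ENNReal.ofReal (t ^ (-(κ / p))) := by
          rw [← Real.rpow_mul ht0.le]
          congr 3
          field_simp
    calc ∫⁻ t in Ioi 1, μ {x | t < g x ^ (-p)}
        ≤ ∫⁻ t in Ioi 1, C * ENNReal.ofReal (t ^ (-(κ / p))) :=
          setLIntegral_mono' measurableSet_Ioi hlevel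
      _ = C * ENNReal.ofReal (∫ t in Ioi 1, t ^ (-(κ / p))) := by
        rw [lintegral_const_mul _ (by fun_prop),
          ofReal_integral_eq_lintegral_ofReal (integrableOn_Ioi_rpow_of_lt hexp one_pos)
            ((ae_restrict_iff' measurableSet_Ioi).mpr (ae_of_all _ fun t ht =>
              Real.rpow_nonneg (zero_le_one.trans (le_of_lt ht)) _))]
      _ = C * ENNReal.ofReal (p / (κ - p)) := by
        rw [integral_Ioi_rpow_of_lt hexp one_pos, Real.one_rpow,
          show -(κ / p) + 1 = -((κ - p) / p) by field_simp; ring, div_neg, neg_div, neg_neg,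
          one_div, inv_div]

section InnerProductSpace

variable {E : Type*} [NormedAddCommGroup E] [InnerProductSpace ℝ E] [FiniteDimensional ℝ E]
  [MeasurableSpace E] [BorelSpace E]

theorem AffineSubspace.volume_ball_inter_thickening_le (A : AffineSubspace ℝ E) (c : E)
    (R : ℝ) {s : ℝ} (hs : 0 < s) :
    volume (ball c R ∩ thickening s (A : Set E)) ≤
      volume (ball (0 : A.direction) R) * volume (ball (0 : A.directionᗮ) 1) *
        ENNReal.ofReal (s ^ finrank ℝ A.directionᗮ) := by
  rcases (A : Set E).eq_empty_or_nonempty with hA | ⟨a, ha⟩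
  · simp [hA]
  set W := A.direction
  let π : E → W × Wᗮ := fun z => (W.orthogonalProjectionOnto z, Wᗮ.orthogonalProjectionOnto z)
  have hπ : MeasurePreserving π := by
    convert (WithLp.volume_preserving_ofLp W Wᗮ).comp W.orthogonalDecomposition.measurePreserving
    ext z <;> simp [π]
  have hsub : ball c R ∩ thickening s (A : Set E) ⊆
      π ⁻¹' (ball (W.orthogonalProjectionOnto c) R ×ˢ ball (Wᗮ.orthogonalProjectionOnto a) s) := by
    rintro z ⟨hzc, hzA⟩
    obtain ⟨w, hw, hzw⟩ := mem_thickening_iff.mp hzA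
    refine ⟨?_, ?_⟩
    · rw [mem_ball, dist_eq_norm, ← map_sub]
      exact (W.norm_orthogonalProjectionOnto_apply_le _).trans_lt (mem_ball_iff_norm.mp hzc)
    · have hwa : Wᗮ.orthogonalProjectionOnto w = Wᗮ.orthogonalProjectionOnto a := by
        rw [← sub_eq_zero, ← map_sub]
        exact W.orthogonalProjectionOnto_orthogonal_apply_eq_zero
          (AffineSubspace.vsub_mem_direction hw ha)
      rw [mem_ball, dist_eq_norm, ← hwa, ← map_sub]
      exact (Wᗮ.norm_orthogonalProjectionOnto_apply_le _).trans_lt (mem_ball_iff_norm.mp hzw)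
  calc volume (ball c R ∩ thickening s (A : Set E))
      ≤ volume (π ⁻¹' (ball (W.orthogonalProjectionOnto c) R ×ˢ
          ball (Wᗮ.orthogonalProjectionOnto a) s)) := measure_mono hsub
    _ = volume (ball (W.orthogonalProjectionOnto c) R) *
          volume (ball (Wᗮ.orthogonalProjectionOnto a) s) := by
      rw [hπ.measure_preimage (measurableSet_ball.prod measurableSet_ball).nullMeasurableSet,
        Measure.volume_eq_prod, Measure.prod_prod]
    _ = _ := by
      rw [Measure.addHaar_ball_center, Measure.addHaar_ball_of_pos _ _ hs, mul_assoc,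
        mul_comm (ENNReal.ofReal _)]

theorem AffineSubspace.ofReal_sub_mul_lintegral_ball_infDist_rpow_neg_le
    (A : AffineSubspace ℝ E) {T : Set E} (hTA : T ⊆ A) (c : E) (R : ℝ) {p : ℝ} (hp : 0 < p)
    (hpk : p < finrank ℝ A.directionᗮ) :
    ENNReal.ofReal (finrank ℝ A.directionᗮ - p) *
        ∫⁻ z in ball c R, ENNReal.ofReal (infDist z T ^ (-p)) ≤
      ENNReal.ofReal (finrank ℝ A.directionᗮ - p) * volume (ball c R) +
        volume (ball (0 : A.direction) R) * volume (ball (0 : A.directionᗮ) 1) *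
          ENNReal.ofReal p := by
  set k : ℝ := (finrank ℝ A.directionᗮ : ℝ)
  rcases T.eq_empty_or_nonempty with rfl | hT
  · -- junk values: `infDist z ∅ = 0` and `0 ^ (-p) = 0`
    simp [Real.zero_rpow (neg_ne_zero.mpr hp.ne')]
  have hlevel : ∀ s, 0 < s → volume.restrict (ball c R) {z | infDist z T < s} ≤
      volume (ball (0 : A.direction) R) * volume (ball (0 : A.directionᗮ) 1) *
        ENNReal.ofReal (s ^ k) := by
    intro s hs
    rw [Measure.restrict_apply' measurableSet_ball, Real.rpow_natCast]
    calc volume ({z | infDist z T < s} ∩ ball c R)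
        ≤ volume (ball c R ∩ thickening s (A : Set E)) := measure_mono fun z hz =>
          ⟨hz.2, thickening_subset_of_subset s hTA ((mem_thickening_iff_infDist_lt hT).mpr hz.1)⟩
      _ ≤ _ := A.volume_ball_inter_thickening_le c R hs
  have hint := lintegral_ofReal_rpow_neg_le_of_measure_lt_le _ (continuous_infDist_pt T).measurable
    (fun z => infDist_nonneg) hp hpk hlevel
  rw [Measure.restrict_apply_univ] at hint
  calc ENNReal.ofReal (k - p) * ∫⁻ z in ball c R, ENNReal.ofReal (infDist z T ^ (-p))
      ≤ ENNReal.ofReal (k - p) * (volume (ball c R) + volume (ball (0 : A.direction) R) *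
          volume (ball (0 : A.directionᗮ) 1) * ENNReal.ofReal (p / (k - p))) := by gcongr
    _ = _ := by
      rw [mul_add, mul_left_comm, ← ENNReal.ofReal_mul (sub_pos.mpr hpk).le,
        mul_div_cancel₀ _ (sub_pos.mpr hpk).ne']

end InnerProductSpace

theorem stmt0_general (m k d : ℕ) (hk2 : 2 ≤ k) (hkm : k ≤ m)
    (K : ℝ) (hK : 0 < K)
    (L : ℕ) (Xs : Fin L → Set (EuclideanSpace ℝ (Fin m)))
    (X : Set (EuclideanSpace ℝ (Fin m))) (hXne : X.Nonempty)
    (hXunion : X = ⋃ i, Xs i)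
    (hXcomp : ∀ i, IsCompact (Xs i))
    (hXaff : ∀ i, ∃ A : AffineSubspace ℝ (EuclideanSpace ℝ (Fin m)),
      Module.finrank ℝ A.direction = m - k ∧ Xs i ⊆ (A : Set (EuclideanSpace ℝ (Fin m))))
    (ρ : EuclideanSpace ℝ (Fin m) → EuclideanSpace ℝ (Fin d))
    (hbound : ∀ z ∉ X, ‖fderiv ℝ ρ z‖ ≤ K / Metric.infDist z X) :
    ∀ R > 0, ∃ C > 0, ∀ p : ℝ, (k : ℝ) - 1 < p → p < k →
      ENNReal.ofReal ((k : ℝ) - p) *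
        ∫⁻ z in Metric.ball (0 : EuclideanSpace ℝ (Fin m)) R \ X,
          ENNReal.ofReal (‖fderiv ℝ ρ z‖ ^ p)
      ≤ ENNReal.ofReal C := by
  subst hXunion
  intro R _
  choose A hAdim hXA using hXaff
  have hcodim : ∀ i, finrank ℝ (A i).directionᗮ = k := fun i => by
    have := (A i).direction.finrank_add_finrank_orthogonal
    rw [hAdim i, finrank_euclideanSpace_fin] at this
    omega
  set B := ball (0 : EuclideanSpace ℝ (Fin m)) R
  set M := ENNReal.ofReal (max 1 K ^ (k : ℝ))
  set bound := M * ∑ i, (volume B + volume (ball (0 : (A i).direction) R) *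
    volume (ball (0 : (A i).directionᗮ) 1) * ENNReal.ofReal k)
  have hbound_ne_top : bound ≠ ⊤ := by
    simp [bound, M, B, ENNReal.mul_eq_top, measure_ball_lt_top.ne]
  refine ⟨bound.toReal + 1, by positivity, fun p hp1 hpk => ?_⟩
  have hk : (2 : ℝ) ≤ k := by exact_mod_cast hk2
  have hp : 0 < p := by linarith
  calc ENNReal.ofReal (k - p) * ∫⁻ z in B \ ⋃ i, Xs i, ENNReal.ofReal (‖fderiv ℝ ρ z‖ ^ p)
      ≤ ENNReal.ofReal (k - p) *
          (M * ∑ i, ∫⁻ z in B, ENNReal.ofReal (infDist z (Xs i) ^ (-p))) := by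
        gcongr
        exact setLIntegral_diff_iUnion_rpow_le_sum_infDist _ measurableSet_ball hXcomp hXne
          (fun z => norm_nonneg _) hK.le hbound hp hpk.le
    _ = M * ∑ i, ENNReal.ofReal (k - p) *
          ∫⁻ z in B, ENNReal.ofReal (infDist z (Xs i) ^ (-p)) := by
        rw [mul_left_comm, Finset.mul_sum]
    _ ≤ bound := by
        refine mul_le_mul_right (Finset.sum_le_sum fun i _ => ?_) M
        have hpiece := (A i).ofReal_sub_mul_lintegral_ball_infDist_rpow_neg_le (hXA i) 0 R hp
          (by rwa [hcodim])
        rw [hcodim] at hpiece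
        refine hpiece.trans (add_le_add (mul_le_of_le_one_left' ?_) ?_)
        · exact ENNReal.ofReal_le_one.mpr (by linarith)
        · gcongr
    _ ≤ ENNReal.ofReal (bound.toReal + 1) := by
        rw [ENNReal.le_ofReal_iff_toReal_le hbound_ne_top (by positivity)]
        linarith

/-- Uniform bound, as `p → k⁻`, on `(k-p)` times the `p`-energy of a retraction-type map
whose gradient blows up like the inverse distance to a finite union of compact pieces of
`(m-k)`-dimensional affine subspaces. -/
theorem stmt0 (m k d : ℕ) (hk2 : 2 ≤ k) (hkm : k ≤ m) (hd : 1 ≤ d)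
    (K : ℝ) (hK : 0 < K)
    (L : ℕ) (Xs : Fin L → Set (EuclideanSpace ℝ (Fin m)))
    (X : Set (EuclideanSpace ℝ (Fin m))) (hXne : X.Nonempty)
    (hXunion : X = ⋃ i, Xs i)
    (hXcomp : ∀ i, IsCompact (Xs i))
    (hXaff : ∀ i, ∃ A : AffineSubspace ℝ (EuclideanSpace ℝ (Fin m)),
      Module.finrank ℝ A.direction = m - k ∧ Xs i ⊆ (A : Set (EuclideanSpace ℝ (Fin m))))
    (ρ : EuclideanSpace ℝ (Fin m) → EuclideanSpace ℝ (Fin d))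
    (hdiff : ∀ z ∉ X, DifferentiableAt ℝ ρ z)
    (hbound : ∀ z ∉ X, ‖fderiv ℝ ρ z‖ ≤ K / Metric.infDist z X) :
    ∀ R > 0, ∃ C > 0, ∀ p : ℝ, (k : ℝ) - 1 < p → p < k →
      ENNReal.ofReal ((k : ℝ) - p) *
        ∫⁻ z in Metric.ball (0 : EuclideanSpace ℝ (Fin m)) R \ X,
          ENNReal.ofReal (‖fderiv ℝ ρ z‖ ^ p)
      ≤ ENNReal.ofReal C :=
  stmt0_general m k d hk2 hkm K hK L Xs X hXne hXunion hXcomp hXaff ρ hbound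
end

section
/- Let (G, +) be an abelian group and let E_P, E_Q : G → ℝ be functions, each satisfying E(σ) ≥ 0, E(0) = 0 and E(−σ) = E(σ) for all σ ∈ G. Let |·|_P and |·|_Q be the associated decomposition norms. Assume α := inf{ E_Q(σ) : σ ≠ 0 } > 0, and that there exist constants A > 0, B > 0 and exponents β ∈ (0,1], θ ∈ (0,1] such that for every σ ∈ G: E_P(σ) ≤ A · E_Q(σ)^β and E_P(σ) ≥ B · E_Q(σ)^θ. Then for every σ ∈ G one has B · |σ|_Q^θ ≤ |σ|_P ≤ A · α^{β−1} · |σ|_Q. -/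
/-!
The upper bound is pointwise: on nonzero elements `E_Q ≥ α`, so `E_Q^β ≤ α^(β-1) E_Q`, and a
pointwise linear bound `E_P ≤ c E_Q` passes to the infima over decompositions. For the lower
bound, `t ↦ t^θ` is subadditive for `θ ∈ (0,1]`, so `B (Σ E_Q σᵢ)^θ ≤ Σ B E_Q(σᵢ)^θ ≤ Σ E_P σᵢ`
for every decomposition.
-/

/-- The decomposition norm associated to a function `E` on an abelian group:
`|σ| = inf { Σᵢ E σᵢ : σ₁ + ⋯ + σₕ = σ }`, the empty decomposition being allowed for `σ = 0`. -/
noncomputable def decompNorm {G : Type*} [AddCommGroup G] (E : G → ℝ) (σ : G) : ℝ :=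
  sInf {s : ℝ | ∃ l : List G, l.sum = σ ∧ s = (l.map E).sum}

open Set

theorem Real.rpow_list_sum_le_sum_map_rpow {l : List ℝ} (hl : ∀ x ∈ l, 0 ≤ x) {θ : ℝ}
    (hθ : θ ∈ Ioc 0 1) : l.sum ^ θ ≤ (l.map (· ^ θ)).sum :=
  List.le_sum_of_subadditive_on_pred (· ^ θ) (0 ≤ ·) (Real.zero_rpow hθ.1.ne').le le_rfl
    (fun _ _ ha hb => Real.rpow_add_le_add_rpow ha hb hθ.1.le hθ.2)
    (fun _ _ => add_nonneg) l hl

theorem Real.rpow_le_rpow_sub_one_mul {α t β : ℝ} (hα : 0 < α) (ht : t = 0 ∨ α ≤ t)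
    (hβ : β ∈ Ioc 0 1) : t ^ β ≤ α ^ (β - 1) * t := by
  rcases ht with rfl | hαt
  · simp [Real.zero_rpow hβ.1.ne']
  have ht : 0 < t := hα.trans_le hαt
  calc t ^ β = t ^ (β - 1) * t := by rw [← Real.rpow_add_one ht.ne', sub_add_cancel]
    _ ≤ α ^ (β - 1) * t :=
      mul_le_mul_of_nonneg_right (Real.rpow_le_rpow_of_nonpos hα hαt (by linarith [hβ.2])) ht.le

section decompNorm

variable {G : Type*} [AddCommGroup G] {E F : G → ℝ} {σ : G}

theorem le_decompNorm {c : ℝ} (h : ∀ l : List G, l.sum = σ → c ≤ (l.map E).sum) :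
    c ≤ decompNorm E σ :=
  le_csInf ⟨E σ, [σ], by simp⟩ (by rintro _ ⟨l, hl, rfl⟩; exact h l hl)

theorem decompNorm_le_sum (hE : ∀ x, 0 ≤ E x) {l : List G} (hl : l.sum = σ) :
    decompNorm E σ ≤ (l.map E).sum :=
  csInf_le ⟨0, by rintro _ ⟨l, -, rfl⟩; exact List.sum_nonneg (by simpa using fun x _ => hE x)⟩
    ⟨l, hl, rfl⟩

theorem decompNorm_nonneg (hE : ∀ x, 0 ≤ E x) (σ : G) : 0 ≤ decompNorm E σ :=
  le_decompNorm fun l _ => List.sum_nonneg (by simpa using fun x _ => hE x)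

theorem decompNorm_le_mul_of_le_mul (hE : ∀ x, 0 ≤ E x) {c : ℝ} (hc : 0 < c)
    (h : ∀ x, E x ≤ c * F x) (σ : G) : decompNorm E σ ≤ c * decompNorm F σ := by
  rw [← div_le_iff₀' hc]
  refine le_decompNorm fun l hl => ?_
  rw [div_le_iff₀' hc, ← List.sum_map_mul_left]
  exact (decompNorm_le_sum hE hl).trans (List.sum_le_sum fun x _ => h x)

theorem mul_decompNorm_rpow_le (hF : ∀ x, 0 ≤ F x) {B θ : ℝ} (hB : 0 ≤ B) (hθ : θ ∈ Ioc 0 1)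
    (h : ∀ x, B * F x ^ θ ≤ E x) (σ : G) : B * decompNorm F σ ^ θ ≤ decompNorm E σ := by
  refine le_decompNorm fun l hl => ?_
  have hsum : (l.map F).sum ^ θ ≤ (l.map fun x => F x ^ θ).sum := by
    simpa [List.map_map, Function.comp_def] using
      Real.rpow_list_sum_le_sum_map_rpow (l := l.map F) (by simpa using fun x _ => hF x) hθ
  calc B * decompNorm F σ ^ θ ≤ B * (l.map F).sum ^ θ := by
        gcongr B * ?_
        exact Real.rpow_le_rpow (decompNorm_nonneg hF σ) (decompNorm_le_sum hF hl) hθ.1.le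
    _ ≤ B * (l.map fun x => F x ^ θ).sum := by gcongr
    _ = (l.map fun x => B * F x ^ θ).sum := by rw [List.sum_map_mul_left]
    _ ≤ (l.map E).sum := List.sum_le_sum fun x _ => h x

end decompNorm

theorem stmt9_general {G : Type*} [AddCommGroup G] (EP EQ : G → ℝ)
    (hP0 : ∀ σ, 0 ≤ EP σ)
    (hQ0 : ∀ σ, 0 ≤ EQ σ) (hQ00 : EQ 0 = 0)
    (α : ℝ) (hαdef : α = sInf (EQ '' {σ : G | σ ≠ 0})) (hα : 0 < α)
    (A B β θ : ℝ) (hA : 0 < A) (hB : 0 < B)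
    (hβ : β ∈ Set.Ioc (0 : ℝ) 1) (hθ : θ ∈ Set.Ioc (0 : ℝ) 1)
    (hupper : ∀ σ, EP σ ≤ A * EQ σ ^ β)
    (hlower : ∀ σ, B * EQ σ ^ θ ≤ EP σ) :
    ∀ σ : G, B * decompNorm EQ σ ^ θ ≤ decompNorm EP σ ∧
      decompNorm EP σ ≤ A * α ^ (β - 1) * decompNorm EQ σ := by
  have hgap : ∀ x, EQ x = 0 ∨ α ≤ EQ x := by
    intro x
    rcases eq_or_ne x 0 with rfl | hx
    · exact .inl hQ00
    · exact .inr (hαdef ▸ csInf_le ⟨0, by rintro _ ⟨y, -, rfl⟩; exact hQ0 y⟩ ⟨x, hx, rfl⟩)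
  have hlinear : ∀ x, EP x ≤ A * α ^ (β - 1) * EQ x := fun x =>
    (hupper x).trans <| by
      rw [mul_assoc]; gcongr; exact Real.rpow_le_rpow_sub_one_mul hα (hgap x) hβ
  exact fun σ => ⟨mul_decompNorm_rpow_le hQ0 hB.le hθ hlower σ,
    decompNorm_le_mul_of_le_mul hP0 (by positivity) hlinear σ⟩

/-- Comparison of decomposition norms: if `B · E_Q^θ ≤ E_P ≤ A · E_Q^β` with
`β, θ ∈ (0,1]` and `α = inf {E_Q σ : σ ≠ 0} > 0`, then
`B |σ|_Q^θ ≤ |σ|_P ≤ A α^{β-1} |σ|_Q` for every `σ`. -/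
theorem stmt9 {G : Type*} [AddCommGroup G] (EP EQ : G → ℝ)
    (hP0 : ∀ σ, 0 ≤ EP σ) (hP00 : EP 0 = 0) (hPsymm : ∀ σ, EP (-σ) = EP σ)
    (hQ0 : ∀ σ, 0 ≤ EQ σ) (hQ00 : EQ 0 = 0) (hQsymm : ∀ σ, EQ (-σ) = EQ σ)
    (α : ℝ) (hαdef : α = sInf (EQ '' {σ : G | σ ≠ 0})) (hα : 0 < α)
    (A B β θ : ℝ) (hA : 0 < A) (hB : 0 < B)
    (hβ : β ∈ Set.Ioc (0 : ℝ) 1) (hθ : θ ∈ Set.Ioc (0 : ℝ) 1)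
    (hupper : ∀ σ, EP σ ≤ A * EQ σ ^ β)
    (hlower : ∀ σ, B * EQ σ ^ θ ≤ EP σ) :
    ∀ σ : G, B * decompNorm EQ σ ^ θ ≤ decompNorm EP σ ∧
      decompNorm EP σ ≤ A * α ^ (β - 1) * decompNorm EQ σ :=
  stmt9_general EP EQ hP0 hQ0 hQ00 α hαdef hα A B β θ hA hB hβ hθ hupper hlower
end

section
/- Let M ≥ 1 and m ≥ 1 be integers and let p_0 > M be a real number. There exists a constant C > 0, depending only on M, m and p_0, such that for every real p ≥ p_0, every continuously differentiable map u : ℝ^M → ℝ^m, and all points x, y in the closed unit ball of ℝ^M, one has |u(x) − u(y)| ≤ C · ( ‖u‖_{L^p(B)} + ‖Du‖_{L^p(B)} ) · ‖x − y‖^{1 − M/p}. -/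
/-!
Morrey's argument. For a `C¹` map, `u z - u a` is the integral of `Du` along the segment from
`a` to `z`. Averaging over `z` in a set `S ⊆ B ∩ closedBall a r` and substituting
`w = a + t (z - a)` bounds `∫_S |u z - u a|` by `r ∫₀¹ t^{-M} ∫_{B ∩ closedBall a (t r)} |Du| dt`,
and Hölder's inequality on the inner integral turns this into
`r^{1 + M - M/p} ‖Du‖_{L^p(B)} ∫₀¹ t^{-M/p} dt`. The last integral is `(1 - M/p)⁻¹ ≤ (1 - M/p₀)⁻¹`,
which is why the constant stays bounded as `p → ∞`. Finally `u x` and `u y` are compared with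
their averages over a ball of radius `|x - y| / 4` inside `B` and close to both points.
-/

open MeasureTheory Metric Set Module

theorem add_smul_sub_eq_sub_smul_add_smul {R V : Type*} [Ring R] [AddCommGroup V] [Module R V]
    (a z : V) (t : R) : a + t • (z - a) = (a - t • a) + t • z := by
  rw [smul_sub]; abel

theorem rpow_neg_le_max_one_inv {x s : ℝ} (hx : 0 < x) (hs₀ : 0 ≤ s) (hs₁ : s ≤ 1) :
    x ^ (-s) ≤ max 1 x⁻¹ := by
  rcases le_total 1 x with h | h
  · exact le_max_of_le_left (Real.rpow_le_one_of_one_le_of_nonpos h (neg_nonpos.2 hs₀))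
  · refine le_max_of_le_right ?_
    rw [← Real.rpow_neg_one]
    exact Real.rpow_le_rpow_of_exponent_ge hx h (neg_le_neg hs₁)

theorem setIntegral_Ioc_zero_one_rpow {s : ℝ} (hs : -1 < s) :
    ∫ t in Ioc (0 : ℝ) 1, t ^ s = (s + 1)⁻¹ := by
  rw [← intervalIntegral.integral_of_le zero_le_one, integral_rpow (.inl hs), Real.one_rpow,
    Real.zero_rpow (by linarith), sub_zero, one_div]

theorem integrableOn_Ioc_zero_one_rpow {s : ℝ} (hs : -1 < s) :
    IntegrableOn (fun t : ℝ => t ^ s) (Ioc 0 1) :=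
  (intervalIntegrable_iff_integrableOn_Ioc_of_le zero_le_one).1
    (intervalIntegral.intervalIntegrable_rpow' hs)

theorem setIntegral_norm_le_integral_norm_rpow_mul {α G : Type*} [MeasurableSpace α]
    [NormedAddCommGroup G] {μ : Measure α} {f : α → G} {p : ℝ} (hp : 1 < p) {A B : Set α}
    (hAB : A ⊆ B) (hA : μ A ≠ ⊤) (hf : AEStronglyMeasurable f (μ.restrict B))
    (hfp : IntegrableOn (fun x => ‖f x‖ ^ p) B μ) :
    ∫ x in A, ‖f x‖ ∂μ ≤ (∫ x in B, ‖f x‖ ^ p ∂μ) ^ (1 / p) * μ.real A ^ (1 - 1 / p) := by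
  have hpq := Real.HolderConjugate.conjExponent hp
  have : Fact (μ A < ⊤) := ⟨hA.lt_top⟩
  have hfA : MemLp (fun x => ‖f x‖) (ENNReal.ofReal p) (μ.restrict A) := by
    rw [← integrable_norm_rpow_iff (hf.mono_measure (Measure.restrict_mono hAB le_rfl)).norm
      (ENNReal.ofReal_pos.2 (zero_lt_one.trans hp)).ne' ENNReal.ofReal_ne_top]
    simpa [ENNReal.toReal_ofReal (zero_le_one.trans hp.le)] using (hfp.mono_set hAB).integrable
  have holder := integral_mul_le_Lp_mul_Lq_of_nonneg hpq
    (Filter.Eventually.of_forall fun x => norm_nonneg (f x))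
    (Filter.Eventually.of_forall fun _ => zero_le_one) hfA (memLp_const 1)
  simp only [mul_one, Real.one_rpow, integral_const, smul_eq_mul] at holder
  have hq : 1 / p.conjExponent = 1 - 1 / p := by
    rw [eq_sub_iff_add_eq', one_div, one_div, hpq.inv_add_inv_eq_one]
  rw [measureReal_restrict_apply_univ, hq] at holder
  refine holder.trans (mul_le_mul_of_nonneg_right ?_ (by positivity))
  have hnonneg : 0 ≤ fun x => ‖f x‖ ^ p := fun x => by positivity
  gcongr
  exact .of_forall hnonneg

theorem norm_sub_le_inv_mul_setIntegral_add {α F : Type*} [MeasurableSpace α]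
    [NormedAddCommGroup F] [NormedSpace ℝ F] [CompleteSpace F] {μ : Measure α} {u : α → F}
    {S : Set α} (hS₀ : μ S ≠ 0) (hS : μ S ≠ ⊤) (hu : IntegrableOn u S μ) (x y : α) :
    ‖u x - u y‖ ≤ (μ.real S)⁻¹ * (∫ z in S, ‖u z - u x‖ ∂μ + ∫ z in S, ‖u z - u y‖ ∂μ) := by
  have hSpos : 0 < μ.real S := ENNReal.toReal_pos hS₀ hS
  have hsmul :
      μ.real S • (u x - u y) = ∫ z in S, (u z - u y) ∂μ - ∫ z in S, (u z - u x) ∂μ := by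
    have hsub (w : α) : IntegrableOn (fun z => u z - u w) S μ := hu.sub (integrableOn_const hS)
    rw [← integral_sub (hsub y) (hsub x)]
    simp
  rw [le_inv_mul_iff₀ hSpos, ← Real.norm_of_nonneg hSpos.le, ← norm_smul, hsmul, add_comm]
  exact (norm_sub_le _ _).trans (add_le_add (norm_integral_le_integral_norm _)
    (norm_integral_le_integral_norm _))

theorem exists_ball_subset_ball_inter_closedBall {E : Type*} [NormedAddCommGroup E]
    [NormedSpace ℝ E] {x y : E} (hx : x ∈ closedBall 0 1) (hy : y ∈ closedBall 0 1) :
    ∃ c, ball c (‖x - y‖ / 4) ⊆ ball 0 1 ∩ closedBall x ‖x - y‖ ∩ closedBall y ‖x - y‖ := by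
  set r := ‖x - y‖
  set m := midpoint ℝ x y
  have hm : ‖m‖ ≤ 1 := mem_closedBall_zero_iff.1 ((convex_closedBall 0 1).midpoint_mem hx hy)
  have hr : r ≤ 2 := (norm_sub_le x y).trans (by
    linarith [mem_closedBall_zero_iff.1 hx, mem_closedBall_zero_iff.1 hy])
  have hmx : dist m x = r / 2 := by
    rw [dist_midpoint_left, Real.norm_two, dist_eq_norm]; ring
  have hmy : dist m y = r / 2 := by
    rw [dist_midpoint_right, Real.norm_two, dist_eq_norm]; ring
  set c := (1 - r / 4) • m
  have hcm : dist c m ≤ r / 4 := by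
    rw [dist_eq_norm, show c - m = (-(r / 4)) • m by simp only [c]; module, norm_smul,
      Real.norm_eq_abs, abs_neg, abs_of_nonneg (by positivity)]
    exact mul_le_of_le_one_right (by positivity) hm
  have hc : ‖c‖ ≤ 1 - r / 4 := by
    rw [norm_smul, Real.norm_of_nonneg (by linarith)]
    exact mul_le_of_le_one_right (by linarith) hm
  refine ⟨c, fun z hz => ⟨⟨?_, ?_⟩, ?_⟩⟩
  · rw [mem_ball_zero_iff]
    linarith [norm_le_norm_add_norm_sub' z c, mem_ball_iff_norm.1 hz]
  · rw [mem_closedBall]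
    linarith [dist_triangle4 z c m x, mem_ball.1 hz]
  · rw [mem_closedBall]
    linarith [dist_triangle4 z c m y, mem_ball.1 hz]

variable {E F : Type*} [NormedAddCommGroup E] [NormedSpace ℝ E]
  [NormedAddCommGroup F] [NormedSpace ℝ F]

theorem norm_sub_le_mul_integral_norm_fderiv_segment [CompleteSpace F] {u : E → F}
    (hu : ContDiff ℝ 1 u) (a z : E) :
    ‖u z - u a‖ ≤ ‖z - a‖ * ∫ t in Ioc (0 : ℝ) 1, ‖fderiv ℝ u (a + t • (z - a))‖ := by
  have hDu : Continuous fun t : ℝ => fderiv ℝ u (a + t • (z - a)) :=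
    (hu.continuous_fderiv one_ne_zero).comp (by fun_prop)
  have hderiv (t : ℝ) : HasDerivAt (fun s : ℝ => u (a + s • (z - a)))
      (fderiv ℝ u (a + t • (z - a)) (z - a)) t := by
    have hline : HasDerivAt (fun s : ℝ => a + s • (z - a)) (z - a) t := by
      simpa using ((hasDerivAt_id t).smul_const (z - a)).const_add a
    exact (hu.differentiable one_ne_zero _).hasFDerivAt.comp_hasDerivAt t hline
  have hftc : u z - u a = ∫ t in Ioc (0 : ℝ) 1, fderiv ℝ u (a + t • (z - a)) (z - a) := by
    rw [← intervalIntegral.integral_of_le zero_le_one,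
      intervalIntegral.integral_eq_sub_of_hasDerivAt (fun t _ => hderiv t)
        ((hDu.clm_apply continuous_const).intervalIntegrable 0 1)]
    simp
  rw [hftc, ← integral_const_mul]
  refine (norm_integral_le_integral_norm _).trans (setIntegral_mono_on ?_ ?_ measurableSet_Ioc
    fun t _ => ?_)
  · exact (hDu.clm_apply continuous_const).norm.integrableOn_Ioc
  · exact (continuous_const.mul hDu.norm).integrableOn_Ioc
  · rw [mul_comm]; exact ContinuousLinearMap.le_opNorm _ _

variable [FiniteDimensional ℝ E] [MeasurableSpace E] [BorelSpace E] (μ : Measure E)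
  [μ.IsAddHaarMeasure]

theorem integral_comp_homothety (f : E → F) (a : E) {t : ℝ} (ht : 0 ≤ t) :
    ∫ z, f (a + t • (z - a)) ∂μ = (t ^ finrank ℝ E)⁻¹ • ∫ z, f z ∂μ := by
  simp_rw [add_smul_sub_eq_sub_smul_add_smul a _ t]
  rw [Measure.integral_comp_smul_of_nonneg μ (fun w => f (a - t • a + w)) t (hR := ht),
    integral_add_left_eq_self]

theorem setIntegral_comp_homothety_le {φ : E → ℝ} (hφ : 0 ≤ φ) {a : E} {t : ℝ} (ht : 0 < t)
    {S T : Set E} (hS : MeasurableSet S) (hT : MeasurableSet T) (hφT : IntegrableOn φ T μ)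
    (hST : MapsTo (fun z => a + t • (z - a)) S T) :
    ∫ z in S, φ (a + t • (z - a)) ∂μ ≤ (t ^ finrank ℝ E)⁻¹ * ∫ z in T, φ z ∂μ := by
  have hφT' : Integrable (T.indicator φ) μ := (integrable_indicator_iff hT).2 hφT
  have hcomp : Integrable (fun z => T.indicator φ (a + t • (z - a))) μ := by
    simp_rw [add_smul_sub_eq_sub_smul_add_smul a _ t]
    exact (integrable_comp_smul_iff μ (fun w => T.indicator φ (a - t • a + w)) ht.ne').2
      (hφT'.comp_add_left _)
  rw [← integral_indicator hS, ← integral_indicator hT, ← smul_eq_mul,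
    ← integral_comp_homothety μ _ a ht.le]
  refine integral_mono_of_nonneg (.of_forall fun z => indicator_nonneg (fun w _ => hφ _) z)
    hcomp (.of_forall fun z => ?_)
  by_cases hz : z ∈ S
  · simp [indicator_of_mem hz, indicator_of_mem (hST hz)]
  · rw [indicator_of_notMem hz]
    exact indicator_nonneg (fun w _ => hφ _) _

theorem setIntegral_norm_comp_homothety_le {G : Type*} [NormedAddCommGroup G] {f : E → G}
    (hf : Continuous f) {p : ℝ} (hp : 1 < p) {Ω : Set E} (hΩ : Convex ℝ Ω) (hΩo : IsOpen Ω)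
    (hfp : IntegrableOn (fun z => ‖f z‖ ^ p) Ω μ) {a : E} (ha : a ∈ closure Ω) {r t : ℝ}
    (hr : 0 ≤ r) (ht : t ∈ Ioc (0 : ℝ) 1) {S : Set E} (hS : MeasurableSet S) (hSΩ : S ⊆ Ω)
    (hSa : S ⊆ closedBall a r) :
    ∫ z in S, ‖f (a + t • (z - a))‖ ∂μ ≤ t ^ (-(finrank ℝ E / p)) *
      (∫ z in Ω, ‖f z‖ ^ p ∂μ) ^ (1 / p) * (r ^ finrank ℝ E * μ.real (ball 0 1)) ^ (1 - 1 / p) := by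
  obtain ⟨ht0, ht1⟩ := ht
  set T := Ω ∩ closedBall a (t * r)
  have hmaps : MapsTo (fun z => a + t • (z - a)) S T := by
    intro z hz
    refine ⟨?_, ?_⟩
    · rw [← hΩo.interior_eq] at hSΩ ⊢
      exact hΩ.add_smul_sub_mem_interior' ha (hSΩ hz) ⟨ht0, ht1⟩
    · rw [mem_closedBall_iff_norm, add_sub_cancel_left, norm_smul, Real.norm_of_nonneg ht0.le]
      exact mul_le_mul_of_nonneg_left (mem_closedBall_iff_norm.1 (hSa hz)) ht0.le
  have hT : μ.real T ≤ (t * r) ^ finrank ℝ E * μ.real (ball 0 1) := by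
    rw [← Measure.addHaar_real_closedBall μ a (by positivity)]
    exact measureReal_mono inter_subset_right measure_closedBall_lt_top.ne
  have hfT : IntegrableOn (fun z => ‖f z‖) T μ :=
    (hf.norm.continuousOn.integrableOn_compact (isCompact_closedBall a (t * r))).mono_set
      inter_subset_right
  calc ∫ z in S, ‖f (a + t • (z - a))‖ ∂μ
      ≤ (t ^ finrank ℝ E)⁻¹ * ∫ z in T, ‖f z‖ ∂μ :=
        setIntegral_comp_homothety_le μ (fun z => norm_nonneg (f z)) ht0 hS
          (hΩo.measurableSet.inter measurableSet_closedBall) hfT hmaps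
    _ ≤ (t ^ finrank ℝ E)⁻¹ * ((∫ z in Ω, ‖f z‖ ^ p ∂μ) ^ (1 / p) *
          ((t * r) ^ finrank ℝ E * μ.real (ball 0 1)) ^ (1 - 1 / p)) := by
        gcongr
        refine (setIntegral_norm_le_integral_norm_rpow_mul hp inter_subset_left ?_
          hf.aestronglyMeasurable hfp).trans ?_
        · exact (measure_lt_top_of_subset inter_subset_right measure_closedBall_lt_top.ne).ne
        · gcongr
          exact sub_nonneg.2 ((div_le_one (by linarith)).2 hp.le)
    _ = _ := by
        have htpow : (t ^ finrank ℝ E)⁻¹ * (t ^ finrank ℝ E) ^ (1 - 1 / p)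
            = t ^ (-(finrank ℝ E / p)) := by
          rw [← Real.rpow_natCast, ← Real.rpow_neg ht0.le, ← Real.rpow_mul ht0.le,
            ← Real.rpow_add ht0]
          congr 1
          ring
        rw [mul_pow, mul_assoc (t ^ _), Real.mul_rpow (by positivity) (by positivity), ← htpow]
        ring

theorem setIntegral_norm_sub_le_of_convex [CompleteSpace F] {u : E → F} (hu : ContDiff ℝ 1 u)
    {p : ℝ} (hp : 1 < p) (hpd : (finrank ℝ E : ℝ) < p) {Ω : Set E} (hΩ : Convex ℝ Ω) (hΩo : IsOpen Ω)
    (hDu : IntegrableOn (fun z => ‖fderiv ℝ u z‖ ^ p) Ω μ) {a : E} (ha : a ∈ closure Ω)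
    {r : ℝ} (hr : 0 ≤ r) {S : Set E} (hS : MeasurableSet S) (hSΩ : S ⊆ Ω)
    (hSa : S ⊆ closedBall a r) :
    ∫ z in S, ‖u z - u a‖ ∂μ ≤ (1 - finrank ℝ E / p)⁻¹ *
      (∫ z in Ω, ‖fderiv ℝ u z‖ ^ p ∂μ) ^ (1 / p) *
      (r ^ finrank ℝ E * μ.real (ball 0 1)) ^ (1 - 1 / p) * r := by
  set c := (∫ z in Ω, ‖fderiv ℝ u z‖ ^ p ∂μ) ^ (1 / p) *
    (r ^ finrank ℝ E * μ.real (ball 0 1)) ^ (1 - 1 / p)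
  have hDuc := hu.continuous_fderiv one_ne_zero
  have hF : Integrable (Function.uncurry fun z (t : ℝ) => ‖fderiv ℝ u (a + t • (z - a))‖)
      ((μ.restrict S).prod (volume.restrict (Ioc 0 1))) := by
    rw [Measure.prod_restrict]
    exact ((hDuc.comp (by fun_prop)).norm.continuousOn.integrableOn_compact
      ((isCompact_closedBall a r).prod isCompact_Icc)).mono_set
      (prod_mono hSa Ioc_subset_Icc_self)
  have hexp : -1 < -(finrank ℝ E / p) := by
    rw [neg_lt_neg_iff, div_lt_one (by linarith)]; exact hpd
  calc ∫ z in S, ‖u z - u a‖ ∂μ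
      ≤ ∫ z in S, r * (∫ t in Ioc (0 : ℝ) 1, ‖fderiv ℝ u (a + t • (z - a))‖) ∂μ := by
        refine setIntegral_mono_on ?_ (hF.integral_prod_left.const_mul r) hS fun z hz => ?_
        · exact ((hu.continuous.sub continuous_const).norm.continuousOn.integrableOn_compact
            (isCompact_closedBall a r)).mono_set hSa
        · exact (norm_sub_le_mul_integral_norm_fderiv_segment hu a z).trans
            (mul_le_mul_of_nonneg_right (mem_closedBall_iff_norm.1 (hSa hz))
              (setIntegral_nonneg measurableSet_Ioc fun _ _ => norm_nonneg _))
    _ = r * ∫ t in Ioc (0 : ℝ) 1, ∫ z in S, ‖fderiv ℝ u (a + t • (z - a))‖ ∂μ := by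
        rw [integral_const_mul, integral_integral_swap hF]
    _ ≤ r * ∫ t in Ioc (0 : ℝ) 1, t ^ (-(finrank ℝ E / p)) * c := by
        refine mul_le_mul_of_nonneg_left (setIntegral_mono_on hF.integral_prod_right
          ((integrableOn_Ioc_zero_one_rpow hexp).mul_const c) measurableSet_Ioc fun t ht =>
          (setIntegral_norm_comp_homothety_le μ hDuc hp hΩ hΩo hDu ha hr ht hS hSΩ hSa).trans_eq
            (mul_assoc _ _ _)) hr
    _ = _ := by
        rw [integral_mul_const, setIntegral_Ioc_zero_one_rpow hexp]
        ring

theorem norm_sub_le_of_contDiff_of_mem_closedBall [CompleteSpace F] {u : E → F}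
    (hu : ContDiff ℝ 1 u) {p : ℝ} (hp : 1 < p) (hpd : (finrank ℝ E : ℝ) < p) {x y : E}
    (hx : x ∈ closedBall 0 1) (hy : y ∈ closedBall 0 1) :
    ‖u x - u y‖ ≤ 2 * 4 ^ finrank ℝ E * (1 - finrank ℝ E / p)⁻¹ *
      μ.real (ball 0 1) ^ (-(1 / p)) * (∫ z in ball 0 1, ‖fderiv ℝ u z‖ ^ p ∂μ) ^ (1 / p) *
      ‖x - y‖ ^ (1 - finrank ℝ E / p) := by
  have hθ : 0 < 1 - finrank ℝ E / p := by
    rw [sub_pos, div_lt_one (by linarith)]; exact hpd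
  obtain rfl | hxy := eq_or_ne x y
  · simp [Real.zero_rpow hθ.ne']
  obtain ⟨c, hc⟩ := exists_ball_subset_ball_inter_closedBall hx hy
  simp only [subset_inter_iff] at hc
  obtain ⟨⟨hcB, hcx⟩, hcy⟩ := hc
  set r := ‖x - y‖
  have hr : 0 < r := norm_sub_pos_iff.2 hxy
  set ω := μ.real (ball (0 : E) 1)
  have hω : 0 < ω := ENNReal.toReal_pos (measure_ball_pos μ 0 one_pos).ne' measure_ball_lt_top.ne
  have hS : μ.real (ball c (r / 4)) = (r / 4) ^ finrank ℝ E * ω := by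
    rw [measureReal_def, Measure.addHaar_ball_of_pos μ c (by positivity), ENNReal.toReal_mul,
      ENNReal.toReal_ofReal (by positivity)]; rfl
  have hDu : IntegrableOn (fun z => ‖fderiv ℝ u z‖ ^ p) (ball 0 1) μ :=
    (((hu.continuous_fderiv one_ne_zero).norm.rpow_const fun _ => .inr (by linarith)
      ).continuousOn.integrableOn_compact (isCompact_closedBall 0 1)).mono_set
      ball_subset_closedBall
  have hosc {a : E} (ha : a ∈ closedBall 0 1) (hSa : ball c (r / 4) ⊆ closedBall a r) :=
    setIntegral_norm_sub_le_of_convex μ hu hp hpd (convex_ball 0 1) isOpen_ball hDu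
      (by rwa [closure_ball 0 one_ne_zero]) hr.le measurableSet_ball hcB hSa
  have hscale : ((r / 4) ^ finrank ℝ E * ω)⁻¹ * ((r ^ finrank ℝ E * ω) ^ (1 - 1 / p) * r)
      = 4 ^ finrank ℝ E * ω ^ (-(1 / p)) * r ^ (1 - finrank ℝ E / p) := by
    have hrd : (r ^ finrank ℝ E) ^ (1 / p) = r ^ (finrank ℝ E / p) := by
      rw [← Real.rpow_natCast, ← Real.rpow_mul hr.le, mul_one_div]
    rw [Real.rpow_sub (by positivity), Real.rpow_one, Real.mul_rpow (by positivity) hω.le, hrd,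
      Real.rpow_neg hω.le, Real.rpow_sub hr, Real.rpow_one, div_pow]
    field_simp
  refine (norm_sub_le_inv_mul_setIntegral_add
    (measure_ball_pos μ c (by positivity : 0 < r / 4)).ne' measure_ball_lt_top.ne ?_ x y).trans ?_
  · exact (hu.continuous.continuousOn.integrableOn_compact (isCompact_closedBall c _)).mono_set
      ball_subset_closedBall
  rw [hS]
  refine (mul_le_mul_of_nonneg_left (add_le_add (hosc hx hcx) (hosc hy hcy))
    (by positivity)).trans_eq ?_
  linear_combination (2 * (1 - finrank ℝ E / p)⁻¹ *
    (∫ z in ball 0 1, ‖fderiv ℝ u z‖ ^ p ∂μ) ^ (1 / p)) * hscale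

theorem stmt10_general (M m : ℕ) (hM : 1 ≤ M) (p₀ : ℝ) (hp₀ : (M : ℝ) < p₀) :
    ∃ C > 0, ∀ p : ℝ, p₀ ≤ p →
      ∀ u : EuclideanSpace ℝ (Fin M) → EuclideanSpace ℝ (Fin m), ContDiff ℝ 1 u →
      ∀ x ∈ Metric.closedBall (0 : EuclideanSpace ℝ (Fin M)) 1,
      ∀ y ∈ Metric.closedBall (0 : EuclideanSpace ℝ (Fin M)) 1,
        ‖u x - u y‖ ≤ C *
          ((∫ z in Metric.ball (0 : EuclideanSpace ℝ (Fin M)) 1, ‖u z‖ ^ p) ^ (1 / p) +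
            (∫ z in Metric.ball (0 : EuclideanSpace ℝ (Fin M)) 1,
              ‖fderiv ℝ u z‖ ^ p) ^ (1 / p)) *
          ‖x - y‖ ^ (1 - (M : ℝ) / p) := by
  have hp₀pos : 0 < p₀ := (Nat.cast_nonneg M).trans_lt hp₀
  have hθ₀ : 0 < 1 - (M : ℝ) / p₀ := by rwa [sub_pos, div_lt_one hp₀pos]
  set ω := volume.real (ball (0 : EuclideanSpace ℝ (Fin M)) 1)
  have hω : 0 < ω :=
    ENNReal.toReal_pos (measure_ball_pos volume 0 one_pos).ne' measure_ball_lt_top.ne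
  refine ⟨2 * 4 ^ M * (1 - (M : ℝ) / p₀)⁻¹ * max 1 ω⁻¹, by positivity,
    fun p hp u hu x hx y hy => ?_⟩
  have hpM : (M : ℝ) < p := hp₀.trans_le hp
  have hp1 : 1 < p := lt_of_le_of_lt (by exact_mod_cast hM) hpM
  have hmorrey := norm_sub_le_of_contDiff_of_mem_closedBall volume hu hp1
    (by rwa [finrank_euclideanSpace_fin]) hx hy
  rw [finrank_euclideanSpace_fin] at hmorrey
  refine hmorrey.trans ?_
  have hK : (1 - (M : ℝ) / p)⁻¹ ≤ (1 - (M : ℝ) / p₀)⁻¹ := by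
    gcongr
  have hω' : ω ^ (-(1 / p)) ≤ max 1 ω⁻¹ :=
    rpow_neg_le_max_one_inv hω (by positivity) ((div_le_one (by linarith)).2 hp1.le)
  have hA : 0 ≤ (∫ z in ball (0 : EuclideanSpace ℝ (Fin M)) 1, ‖u z‖ ^ p) ^ (1 / p) := by
    positivity
  gcongr
  exact le_add_of_nonneg_left hA

/-- Sobolev–Morrey Hölder estimate on the unit ball of `ℝ^M`, with constant uniform in the
exponent `p ≥ p₀ > M`:
`|u(x) - u(y)| ≤ C (‖u‖_{L^p(B)} + ‖Du‖_{L^p(B)}) ‖x - y‖^{1 - M/p}`. -/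
theorem stmt10 (M m : ℕ) (hM : 1 ≤ M) (hm : 1 ≤ m) (p₀ : ℝ) (hp₀ : (M : ℝ) < p₀) :
    ∃ C > 0, ∀ p : ℝ, p₀ ≤ p →
      ∀ u : EuclideanSpace ℝ (Fin M) → EuclideanSpace ℝ (Fin m), ContDiff ℝ 1 u →
      ∀ x ∈ Metric.closedBall (0 : EuclideanSpace ℝ (Fin M)) 1,
      ∀ y ∈ Metric.closedBall (0 : EuclideanSpace ℝ (Fin M)) 1,
        ‖u x - u y‖ ≤ C *
          ((∫ z in Metric.ball (0 : EuclideanSpace ℝ (Fin M)) 1, ‖u z‖ ^ p) ^ (1 / p) +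
            (∫ z in Metric.ball (0 : EuclideanSpace ℝ (Fin M)) 1,
              ‖fderiv ℝ u z‖ ^ p) ^ (1 / p)) *
          ‖x - y‖ ^ (1 - (M : ℝ) / p) :=
  stmt10_general M m hM p₀ hp₀
end

section
/- Let M ≥ 1 and m ≥ 1 be integers and let p_0 > M be a real number. There exists a constant C > 0, depending only on M, m and p_0, such that for every real p ≥ p_0 and every continuously differentiable map u : ℝ^M → ℝ^m, one has ‖u − ū_B‖_{L^p(B)} ≤ C · ‖Du‖_{L^p(B)}, where ū_B denotes the (vector-valued) average of u over B with respect to Lebesgue measure. -/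
/-! For `w, z` in the unit ball `B`, `‖u z - u w‖ ≤ 2 ∫₀¹ ‖Du((1 - t) w + t z)‖ dt`. Averaging
over `w` and swapping the integrals, the homothety `w ↦ (1 - t) w + t z` turns the inner integral
into `(1 - t)^(-M)` times an integral over the ball `B(t z, 1 - t) ⊆ B`, which Hölder bounds by
`(1 - t)^(-M/p) |B|^(1 - 1/p) ‖Du‖_p`. This is integrable in `t` precisely because `p > M`, with
integral `p / (p - M)`, so `|u z - ū_B| ≤ 2 p / (p - M) |B|^(-1/p) ‖Du‖_p` on `B`; integrating
the `p`-th power of this bound over `B` cancels the factor `|B|^(-1/p)`, and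
`p / (p - M) ≤ p₀ / (p₀ - M)`. -/

open MeasureTheory Metric Set

theorem integrableOn_Ioo_one_sub_rpow {r : ℝ} (hr : -1 < r) :
    IntegrableOn (fun t : ℝ => (1 - t) ^ r) (Ioo 0 1) := by
  have h := (intervalIntegral.intervalIntegrable_rpow' (a := 0) (b := 1) hr).comp_sub_left 1
  simp only [sub_zero, sub_self] at h
  exact ((intervalIntegrable_iff_integrableOn_Ioc_of_le zero_le_one).1 h.symm).mono_set
    Ioo_subset_Ioc_self

theorem integral_Ioo_one_sub_rpow {r : ℝ} (hr : -1 < r) :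
    ∫ t in Ioo (0 : ℝ) 1, (1 - t) ^ r = 1 / (r + 1) := by
  rw [← integral_Ioc_eq_integral_Ioo, ← intervalIntegral.integral_of_le zero_le_one,
    intervalIntegral.integral_comp_sub_left (fun x : ℝ => x ^ r) 1, sub_self, sub_zero,
    integral_rpow (Or.inl hr), Real.one_rpow, Real.zero_rpow (by linarith), sub_zero]

theorem setIntegral_rpow_rpow_le_measureReal_rpow_mul {α : Type*} [MeasurableSpace α]
    {ν : Measure α} {s : Set α} (hs : MeasurableSet s) (hνs : ν s ≠ ⊤) {f : α → ℝ} {K p : ℝ}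
    (hp : 0 < p) (hK : 0 ≤ K) (hf_nonneg : ∀ x ∈ s, 0 ≤ f x) (hfK : ∀ x ∈ s, f x ≤ K) :
    (∫ x in s, f x ^ p ∂ν) ^ (1 / p) ≤ ν.real s ^ (1 / p) * K := by
  have hint : ∫ x in s, f x ^ p ∂ν ≤ ∫ _ in s, K ^ p ∂ν := by
    refine integral_mono_of_nonneg ?_ (integrableOn_const hνs) ?_ <;>
      filter_upwards [ae_restrict_mem hs] with x hx
    · exact Real.rpow_nonneg (hf_nonneg x hx) p
    · exact Real.rpow_le_rpow (hf_nonneg x hx) (hfK x hx) hp.le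
  calc (∫ x in s, f x ^ p ∂ν) ^ (1 / p) ≤ (ν.real s * K ^ p) ^ (1 / p) := by
        rw [setIntegral_const, smul_eq_mul] at hint
        exact Real.rpow_le_rpow (setIntegral_nonneg hs fun x hx => Real.rpow_nonneg
          (hf_nonneg x hx) p) hint (by positivity)
    _ = ν.real s ^ (1 / p) * K := by
        rw [Real.mul_rpow measureReal_nonneg (Real.rpow_nonneg hK p), one_div,
          Real.rpow_rpow_inv hK hp.ne']

theorem integral_le_integral_rpow_mul_measureReal {α : Type*} [MeasurableSpace α]
    {ν : Measure α} [IsFiniteMeasure ν] {p : ℝ} (hp : 1 < p) {f : α → ℝ} (hf_nonneg : 0 ≤ f)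
    (hf : MemLp f (ENNReal.ofReal p) ν) :
    ∫ x, f x ∂ν ≤ (∫ x, f x ^ p ∂ν) ^ (1 / p) * ν.real univ ^ (1 - 1 / p) := by
  have hpq := Real.HolderConjugate.conjExponent hp
  have h := integral_mul_le_Lp_mul_Lq_of_nonneg hpq (Filter.Eventually.of_forall hf_nonneg)
    (Filter.Eventually.of_forall fun _ => zero_le_one) hf (memLp_const (1 : ℝ))
  simp only [mul_one, Real.one_rpow, integral_const, smul_eq_mul] at h
  simpa only [one_div, hpq.one_sub_inv] using h

variable {E F : Type*} [NormedAddCommGroup E] [NormedAddCommGroup F]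

theorem Continuous.integrableOn_ball [MeasurableSpace E] [ProperSpace E] [OpensMeasurableSpace E]
    {μ : Measure E} [IsFiniteMeasureOnCompacts μ] {f : E → F} (hf : Continuous f) (x : E) (r : ℝ) :
    IntegrableOn f (ball x r) μ :=
  (hf.continuousOn.integrableOn_compact (isCompact_closedBall x r)).mono_set ball_subset_closedBall

variable [NormedSpace ℝ E] [NormedSpace ℝ F]

theorem norm_sub_le_intervalIntegral_norm_fderiv_lineMap_mul [CompleteSpace F] {u : E → F}
    (hu : ContDiff ℝ 1 u) (w z : E) :
    ‖u z - u w‖ ≤ (∫ t in (0 : ℝ)..1, ‖fderiv ℝ u (AffineMap.lineMap w z t)‖) * ‖z - w‖ := by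
  have hDu : Continuous fun t : ℝ => fderiv ℝ u (AffineMap.lineMap w z t) :=
    (hu.continuous_fderiv one_ne_zero).comp AffineMap.lineMap_continuous
  have hderiv (t : ℝ) : HasDerivAt (fun s => u (AffineMap.lineMap w z s))
      (fderiv ℝ u (AffineMap.lineMap w z t) (z - w)) t :=
    ((hu.differentiable one_ne_zero) _).hasFDerivAt.comp_hasDerivAt t
      AffineMap.hasDerivAt_lineMap
  have hftc : ∫ t in (0 : ℝ)..1, fderiv ℝ u (AffineMap.lineMap w z t) (z - w) = u z - u w := by
    simpa using intervalIntegral.integral_eq_sub_of_hasDerivAt (fun t _ => hderiv t)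
      ((hDu.clm_apply continuous_const).intervalIntegrable 0 1)
  calc ‖u z - u w‖ = ‖∫ t in (0 : ℝ)..1, fderiv ℝ u (AffineMap.lineMap w z t) (z - w)‖ := by
        rw [hftc]
    _ ≤ ∫ t in (0 : ℝ)..1, ‖fderiv ℝ u (AffineMap.lineMap w z t)‖ * ‖z - w‖ :=
        intervalIntegral.norm_integral_le_of_norm_le zero_le_one
          (Filter.Eventually.of_forall fun t _ => (fderiv ℝ u _).le_opNorm _)
          ((hDu.norm.mul continuous_const).intervalIntegrable 0 1)
    _ = (∫ t in (0 : ℝ)..1, ‖fderiv ℝ u (AffineMap.lineMap w z t)‖) * ‖z - w‖ :=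
        intervalIntegral.integral_mul_const _ _

section Haar

variable [FiniteDimensional ℝ E] [MeasurableSpace E] [BorelSpace E]
  (μ : Measure E) [μ.IsAddHaarMeasure]

theorem setIntegral_unitBall_comp_smul_add (f : E → F) {R : ℝ} (hR : 0 < R) (a : E) :
    ∫ x in ball 0 1, f (R • x + a) ∂μ = (R ^ Module.finrank ℝ E)⁻¹ • ∫ y in ball a R, f y ∂μ := by
  have hpreimage : (· + a) ⁻¹' ball a R = ball (0 : E) R := by
    ext x
    simp [dist_eq_norm]
  rw [Measure.setIntegral_comp_smul_of_pos μ (fun x => f (x + a)) _ hR, smul_unitBall_of_pos hR,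
    ← (measurePreserving_add_right μ a).setIntegral_preimage_emb (measurableEmbedding_addRight a)
      f (ball a R), hpreimage]

theorem setIntegral_ball_le_of_ball_subset_unitBall {g : E → ℝ} (hg : Continuous g)
    (hg_nonneg : 0 ≤ g) {p : ℝ} (hp : 1 < p) {a : E} {R : ℝ} (hR : 0 < R)
    (hsub : ball a R ⊆ ball 0 1) :
    ∫ y in ball a R, g y ∂μ ≤
      (∫ y in ball 0 1, g y ^ p ∂μ) ^ (1 / p) *
        (R ^ Module.finrank ℝ E * μ.real (ball 0 1)) ^ (1 - 1 / p) := by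
  have : IsFiniteMeasure (μ.restrict (ball a R)) :=
    isFiniteMeasure_restrict.2 measure_ball_lt_top.ne
  obtain ⟨K, hK⟩ := (isCompact_closedBall (0 : E) 1).exists_bound_of_continuousOn hg.continuousOn
  have hg_memLp : MemLp g (ENNReal.ofReal p) (μ.restrict (ball a R)) := by
    refine MemLp.of_bound hg.aestronglyMeasurable K ?_
    filter_upwards [ae_restrict_mem measurableSet_ball] with y hy
    exact hK y (ball_subset_closedBall (hsub hy))
  have hholder := integral_le_integral_rpow_mul_measureReal hp hg_nonneg hg_memLp
  rw [measureReal_restrict_apply_univ, measureReal_def, Measure.addHaar_ball_of_pos μ _ hR,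
    ENNReal.toReal_mul, ENNReal.toReal_ofReal (by positivity), ← measureReal_def] at hholder
  have hmono : ∫ y in ball a R, g y ^ p ∂μ ≤ ∫ y in ball 0 1, g y ^ p ∂μ :=
    setIntegral_mono_set ((hg.rpow_const fun _ => Or.inr (by linarith)).integrableOn_ball 0 1)
      (Filter.Eventually.of_forall fun y => Real.rpow_nonneg (hg_nonneg y) p) hsub.eventuallyLE
  refine hholder.trans (mul_le_mul_of_nonneg_right ?_ (by positivity))
  exact Real.rpow_le_rpow (setIntegral_nonneg measurableSet_ball
    fun y _ => Real.rpow_nonneg (hg_nonneg y) p) hmono (by positivity)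

theorem setIntegral_unitBall_comp_lineMap_le {g : E → ℝ} (hg : Continuous g) (hg_nonneg : 0 ≤ g)
    {p : ℝ} (hp : 1 < p) {z : E} (hz : z ∈ ball (0 : E) 1) {t : ℝ} (ht : t ∈ Ioo (0 : ℝ) 1) :
    ∫ w in ball 0 1, g (AffineMap.lineMap w z t) ∂μ ≤
      (1 - t) ^ (-(Module.finrank ℝ E / p)) * μ.real (ball 0 1) ^ (1 - 1 / p) *
        (∫ y in ball 0 1, g y ^ p ∂μ) ^ (1 / p) := by
  set d := Module.finrank ℝ E
  have h1t : 0 < 1 - t := sub_pos.2 ht.2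
  have hs : 0 < (1 - t) ^ d := pow_pos h1t d
  have hsub : ball (t • z) (1 - t) ⊆ ball 0 1 := by
    apply ball_subset_ball'
    rw [dist_zero_right, norm_smul, Real.norm_of_nonneg ht.1.le]
    nlinarith [mem_ball_zero_iff.1 hz, ht.1]
  have hrpow : (1 - t) ^ (-(d / p)) = ((1 - t) ^ d) ^ (-(1 / p)) := by
    rw [← Real.rpow_natCast, ← Real.rpow_mul h1t.le]
    ring_nf
  calc ∫ w in ball 0 1, g (AffineMap.lineMap w z t) ∂μ
        = ((1 - t) ^ d)⁻¹ * ∫ y in ball (t • z) (1 - t), g y ∂μ := by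
        simp_rw [AffineMap.lineMap_apply_module]
        exact setIntegral_unitBall_comp_smul_add μ g h1t (t • z)
    _ ≤ ((1 - t) ^ d)⁻¹ * ((∫ y in ball 0 1, g y ^ p ∂μ) ^ (1 / p) *
          ((1 - t) ^ d * μ.real (ball 0 1)) ^ (1 - 1 / p)) := by
        gcongr
        exact setIntegral_ball_le_of_ball_subset_unitBall μ hg hg_nonneg hp h1t hsub
    _ = _ := by
        rw [hrpow, Real.mul_rpow hs.le measureReal_nonneg, Real.rpow_sub hs, Real.rpow_one,
          Real.rpow_neg hs.le]
        field_simp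

theorem setIntegral_norm_sub_le_two_mul_integral_lineMap [CompleteSpace F] {u : E → F}
    (hu : ContDiff ℝ 1 u) {z : E} (hz : z ∈ ball (0 : E) 1) :
    ∫ w in ball 0 1, ‖u z - u w‖ ∂μ ≤
      2 * ∫ t in Ioo (0 : ℝ) 1, ∫ w in ball 0 1, ‖fderiv ℝ u (AffineMap.lineMap w z t)‖ ∂μ := by
  set G : E × ℝ → ℝ := fun q => ‖fderiv ℝ u (AffineMap.lineMap q.1 z q.2)‖
  have hG : Continuous G := (hu.continuous_fderiv one_ne_zero).norm.comp (by fun_prop)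
  have hG_int : Integrable G ((μ.restrict (ball 0 1)).prod (volume.restrict (Ioo 0 1))) := by
    rw [Measure.prod_restrict]
    exact (hG.continuousOn.integrableOn_compact
      ((isCompact_closedBall 0 1).prod isCompact_Icc)).mono_set
        (prod_mono ball_subset_closedBall Ioo_subset_Icc_self)
  have hsegment : ∀ w ∈ ball (0 : E) 1, ‖u z - u w‖ ≤ 2 * ∫ t in Ioo (0 : ℝ) 1, G (w, t) := by
    intro w hw
    have hzw : ‖z - w‖ ≤ 2 := by
      linarith [norm_sub_le z w, mem_ball_zero_iff.1 hz, mem_ball_zero_iff.1 hw]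
    have hG_nonneg : 0 ≤ ∫ t in (0 : ℝ)..1, G (w, t) :=
      intervalIntegral.integral_nonneg zero_le_one fun t _ => norm_nonneg _
    calc ‖u z - u w‖ ≤ (∫ t in (0 : ℝ)..1, G (w, t)) * ‖z - w‖ :=
          norm_sub_le_intervalIntegral_norm_fderiv_lineMap_mul hu w z
      _ ≤ (∫ t in (0 : ℝ)..1, G (w, t)) * 2 := by gcongr
      _ = 2 * ∫ t in Ioo (0 : ℝ) 1, G (w, t) := by
          rw [intervalIntegral.integral_of_le zero_le_one, integral_Ioc_eq_integral_Ioo, mul_comm]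
  calc ∫ w in ball 0 1, ‖u z - u w‖ ∂μ ≤ ∫ w in ball 0 1, 2 * (∫ t in Ioo (0 : ℝ) 1, G (w, t)) ∂μ :=
        setIntegral_mono_on ((continuous_const.sub hu.continuous).norm.integrableOn_ball 0 1)
          (hG_int.integral_prod_left.const_mul 2) measurableSet_ball hsegment
    _ = 2 * ∫ t in Ioo (0 : ℝ) 1, ∫ w in ball 0 1, G (w, t) ∂μ := by
        rw [integral_const_mul, integral_integral_swap hG_int]

theorem norm_sub_setAverage_unitBall_le [CompleteSpace F] {u : E → F} (hu : ContDiff ℝ 1 u)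
    {p : ℝ} (hp : 1 < p) (hdp : (Module.finrank ℝ E : ℝ) < p) {z : E} (hz : z ∈ ball (0 : E) 1) :
    ‖u z - (μ.real (ball 0 1))⁻¹ • ∫ w in ball 0 1, u w ∂μ‖ ≤
      2 * (p / (p - Module.finrank ℝ E)) * (∫ y in ball 0 1, ‖fderiv ℝ u y‖ ^ p ∂μ) ^ (1 / p) /
        μ.real (ball 0 1) ^ (1 / p) := by
  set d := Module.finrank ℝ E
  set ω := μ.real (ball (0 : E) 1)
  set N := (∫ y in ball 0 1, ‖fderiv ℝ u y‖ ^ p ∂μ) ^ (1 / p)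
  have hω : 0 < ω := ENNReal.toReal_pos (measure_ball_pos μ 0 one_pos).ne' measure_ball_lt_top.ne
  have hp0 : 0 < p := by linarith
  have hr : -1 < -(d / p) := by
    rw [neg_lt_neg_iff, div_lt_one hp0]
    exact hdp
  have hDu : Continuous fun y => ‖fderiv ℝ u y‖ := (hu.continuous_fderiv one_ne_zero).norm
  have havg : u z - ω⁻¹ • ∫ w in ball 0 1, u w ∂μ = ω⁻¹ • ∫ w in ball 0 1, (u z - u w) ∂μ := by
    rw [integral_sub (integrableOn_const (C := u z) measure_ball_lt_top.ne)
        (hu.continuous.integrableOn_ball 0 1),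
      setIntegral_const, smul_sub, smul_smul, inv_mul_cancel₀ hω.ne', one_smul]
  have hinner : ∫ t in Ioo (0 : ℝ) 1, ∫ w in ball 0 1, ‖fderiv ℝ u (AffineMap.lineMap w z t)‖ ∂μ ≤
      ∫ t in Ioo (0 : ℝ) 1, (1 - t) ^ (-(d / p)) * ω ^ (1 - 1 / p) * N := by
    refine integral_mono_of_nonneg (Filter.Eventually.of_forall fun t =>
      setIntegral_nonneg measurableSet_ball fun w _ => norm_nonneg _)
      (((integrableOn_Ioo_one_sub_rpow hr).mul_const _).mul_const _) ?_
    filter_upwards [ae_restrict_mem measurableSet_Ioo] with t ht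
    exact setIntegral_unitBall_comp_lineMap_le μ hDu (fun _ => norm_nonneg _) hp hz ht
  calc ‖u z - ω⁻¹ • ∫ w in ball 0 1, u w ∂μ‖ ≤ ω⁻¹ * ∫ w in ball 0 1, ‖u z - u w‖ ∂μ := by
        rw [havg, norm_smul, Real.norm_of_nonneg (inv_nonneg.2 hω.le)]
        gcongr
        exact norm_integral_le_integral_norm _
    _ ≤ ω⁻¹ * (2 * ∫ t in Ioo (0 : ℝ) 1, (1 - t) ^ (-(d / p)) * ω ^ (1 - 1 / p) * N) := by
        gcongr
        exact (setIntegral_norm_sub_le_two_mul_integral_lineMap μ hu hz).trans (by gcongr)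
    _ = 2 * (p / (p - d)) * N / ω ^ (1 / p) := by
        rw [integral_mul_const, integral_mul_const, integral_Ioo_one_sub_rpow hr,
          Real.rpow_sub hω, Real.rpow_one]
        field_simp
        ring

end Haar

theorem stmt12_general (M m : ℕ) (hM : 1 ≤ M) (p₀ : ℝ) (hp₀ : (M : ℝ) < p₀) :
    ∃ C > 0, ∀ p : ℝ, p₀ ≤ p →
      ∀ u : EuclideanSpace ℝ (Fin M) → EuclideanSpace ℝ (Fin m), ContDiff ℝ 1 u →
        (∫ z in Metric.ball (0 : EuclideanSpace ℝ (Fin M)) 1,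
            ‖u z - (volume (Metric.ball (0 : EuclideanSpace ℝ (Fin M)) 1)).toReal⁻¹ •
              ∫ w in Metric.ball (0 : EuclideanSpace ℝ (Fin M)) 1, u w‖ ^ p) ^ (1 / p) ≤
          C * (∫ z in Metric.ball (0 : EuclideanSpace ℝ (Fin M)) 1,
            ‖fderiv ℝ u z‖ ^ p) ^ (1 / p) := by
  have hM₀ : (1 : ℝ) ≤ M := by exact_mod_cast hM
  refine ⟨2 * (p₀ / (p₀ - M)), mul_pos two_pos (div_pos (by linarith) (by linarith)), ?_⟩
  intro p hp u hu
  have hp_pos : 0 < p := by linarith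
  set B := ball (0 : EuclideanSpace ℝ (Fin M)) 1
  set N := (∫ z in B, ‖fderiv ℝ u z‖ ^ p) ^ (1 / p)
  have hN : 0 ≤ N := Real.rpow_nonneg (setIntegral_nonneg measurableSet_ball fun _ _ =>
    Real.rpow_nonneg (norm_nonneg _) p) _
  have hpointwise := fun z (hz : z ∈ B) => norm_sub_setAverage_unitBall_le volume hu
    (by linarith : 1 < p) (by simpa using (by linarith : (M : ℝ) < p)) hz
  simp only [finrank_euclideanSpace_fin] at hpointwise
  have hω_rpow : 0 < volume.real B ^ (1 / p) := Real.rpow_pos_of_pos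
    (ENNReal.toReal_pos (measure_ball_pos volume 0 one_pos).ne' measure_ball_lt_top.ne) _
  have hC : 0 ≤ 2 * (p / (p - M)) := mul_nonneg zero_le_two (div_nonneg hp_pos.le (by linarith))
  calc _ ≤ volume.real B ^ (1 / p) * (2 * (p / (p - M)) * N / volume.real B ^ (1 / p)) :=
        setIntegral_rpow_rpow_le_measureReal_rpow_mul measurableSet_ball measure_ball_lt_top.ne
          hp_pos (by positivity) (fun _ _ => norm_nonneg _) hpointwise
    _ = 2 * (p / (p - M)) * N := mul_div_cancel₀ _ hω_rpow.ne'
    _ ≤ 2 * (p₀ / (p₀ - M)) * N := by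
        gcongr 2 * ?_ * _
        rw [div_le_div_iff₀ (by linarith) (by linarith)]
        nlinarith

/-- Poincaré inequality on the unit ball of `ℝ^M`, with constant uniform in the exponent
`p ≥ p₀ > M`: `‖u - ū_B‖_{L^p(B)} ≤ C ‖Du‖_{L^p(B)}`, where `ū_B` is the average of `u`
over the ball. -/
theorem stmt12 (M m : ℕ) (hM : 1 ≤ M) (hm : 1 ≤ m) (p₀ : ℝ) (hp₀ : (M : ℝ) < p₀) :
    ∃ C > 0, ∀ p : ℝ, p₀ ≤ p →
      ∀ u : EuclideanSpace ℝ (Fin M) → EuclideanSpace ℝ (Fin m), ContDiff ℝ 1 u →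
        (∫ z in Metric.ball (0 : EuclideanSpace ℝ (Fin M)) 1,
            ‖u z - (volume (Metric.ball (0 : EuclideanSpace ℝ (Fin M)) 1)).toReal⁻¹ •
              ∫ w in Metric.ball (0 : EuclideanSpace ℝ (Fin M)) 1, u w‖ ^ p) ^ (1 / p) ≤
          C * (∫ z in Metric.ball (0 : EuclideanSpace ℝ (Fin M)) 1,
            ‖fderiv ℝ u z‖ ^ p) ^ (1 / p) :=
  stmt12_general M m hM p₀ hp₀
end
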